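/- arXiv:2512.23061 — 4 statements merged into one kernel-verified Lean document; each statement's English description precedes it below -/
import Mathlib

section
/- Leibniz rule for divided differences: for functions f, g : ℝ → ℝ and pairwise distinct nodes x_0,…,x_q, one has (f·g)[x_0,…,x_q] = Σ_{k=0}^{q} f[x_0,…,x_k] · g[x_k,…,x_q]. -/
/-- Divided difference of order `q` of `f` on nodes `x 0, …, x q`. -/
noncomputable def divDiff (f : ℝ → ℝ) : (q : ℕ) → (Fin (q + 1) → ℝ) → ℝ
  | 0, x => f (x 0)
  | q + 1, x =>
      (divDiff f q (fun i => x i.succ) - divDiff f q (fun i => x i.castSucc)) /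
        (x (Fin.last (q + 1)) - x 0)

/-- ℕ-indexed divided difference: nodes `x a, …, x (a+n)`. -/
noncomputable def dd (f : ℝ → ℝ) (x : ℕ → ℝ) : ℕ → ℕ → ℝ
  | a, 0 => f (x a)
  | a, n + 1 => (dd f x (a + 1) n - dd f x a n) / (x (a + n + 1) - x a)

lemma dd_mul_sub (f : ℝ → ℝ) (x : ℕ → ℝ) (a n : ℕ) (h : x (a + n + 1) ≠ x a) :
    dd f x (a + 1) n - dd f x a n = (x (a + n + 1) - x a) * dd f x a (n + 1) := by
  rw [dd, ← mul_div_assoc, mul_div_cancel_left₀ _ (sub_ne_zero.mpr h)]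

lemma dd_leibniz (f g : ℝ → ℝ) (x : ℕ → ℝ) :
    ∀ n a, (∀ i j, a ≤ i → i < j → j ≤ a + n → x i ≠ x j) →
      dd (fun t => f t * g t) x a n =
        ∑ k ∈ Finset.range (n + 1), dd f x a k * dd g x (a + k) (n - k) := by
  intro n
  induction n with
  | zero => intro a _; simp [dd]
  | succ n ih =>
    intro a h
    have hne : x (a + n + 1) - x a ≠ 0 :=
      sub_ne_zero.mpr (fun e => h a (a + n + 1) le_rfl (by omega) (by omega) e.symm)
    have h1 : dd (fun t => f t * g t) x (a + 1) n =
        ∑ k ∈ Finset.range (n + 1), dd f x (a + 1) k * dd g x (a + 1 + k) (n - k) :=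
      ih (a + 1) (fun i j hi hij hj => h i j (by omega) hij (by omega))
    have h2 : dd (fun t => f t * g t) x a n =
        ∑ k ∈ Finset.range (n + 1), dd f x a k * dd g x (a + k) (n - k) :=
      ih a (fun i j hi hij hj => h i j hi hij (by omega))
    set u : ℕ → ℝ := fun j => (x (a + j) - x a) * (dd f x a j * dd g x (a + j) (n + 1 - j))
      with hu_def
    set v : ℕ → ℝ := fun k => (x (a + n + 1) - x (a + k)) *
      (dd f x a k * dd g x (a + k) (n + 1 - k)) with hv_def
    have key : dd (fun t => f t * g t) x (a + 1) n - dd (fun t => f t * g t) x a n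
        = (x (a + n + 1) - x a) *
          ∑ k ∈ Finset.range (n + 2), dd f x a k * dd g x (a + k) (n + 1 - k) := by
      rw [h1, h2, ← Finset.sum_sub_distrib]
      have step : ∀ k ∈ Finset.range (n + 1),
          dd f x (a + 1) k * dd g x (a + 1 + k) (n - k) - dd f x a k * dd g x (a + k) (n - k)
            = u (k + 1) + v k := by
        intro k hk
        rw [Finset.mem_range] at hk
        have hk' : k ≤ n := by omega
        have hA := dd_mul_sub f x a k
          (fun e => h a (a + k + 1) le_rfl (by omega) (by omega) e.symm)
        have hB := dd_mul_sub g x (a + k) (n - k)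
          (fun e => h (a + k) (a + k + (n - k) + 1) (by omega) (by omega) (by omega) e.symm)
        have e1 : a + k + (n - k) + 1 = a + n + 1 := by omega
        have e2 : n - k + 1 = n + 1 - k := by omega
        have e3 : a + 1 + k = a + k + 1 := by omega
        rw [e1, e2] at hB
        rw [e3]
        simp only [hu_def, hv_def]
        have e4 : a + (k + 1) = a + k + 1 := by omega
        have e5 : n + 1 - (k + 1) = n - k := by omega
        rw [e4, e5]
        linear_combination dd g x (a + k + 1) (n - k) * hA + dd f x a k * hB
      rw [Finset.sum_congr rfl step, Finset.sum_add_distrib]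
      have hu : ∑ k ∈ Finset.range (n + 2), u k
          = (∑ k ∈ Finset.range (n + 1), u (k + 1)) + u 0 := Finset.sum_range_succ' u (n + 1)
      have hv : ∑ k ∈ Finset.range (n + 2), v k
          = (∑ k ∈ Finset.range (n + 1), v k) + v (n + 1) := Finset.sum_range_succ v (n + 1)
      have hu0 : u 0 = 0 := by simp [hu_def]
      have hvn : v (n + 1) = 0 := by
        show (x (a + n + 1) - x (a + n + 1)) * _ = 0
        simp
      have huv : ∀ k, u k + v k
          = (x (a + n + 1) - x a) * (dd f x a k * dd g x (a + k) (n + 1 - k)) := by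
        intro k; simp only [hu_def, hv_def]; ring
      rw [Finset.mul_sum]
      calc (∑ k ∈ Finset.range (n + 1), u (k + 1)) + ∑ k ∈ Finset.range (n + 1), v k
          = (∑ k ∈ Finset.range (n + 2), u k) + ∑ k ∈ Finset.range (n + 2), v k := by
            rw [hu, hv, hu0, hvn]; ring
        _ = ∑ k ∈ Finset.range (n + 2), (u k + v k) := by rw [Finset.sum_add_distrib]
        _ = _ := Finset.sum_congr rfl (fun k _ => huv k)
    rw [dd, key, mul_div_cancel_left₀ _ hne]

lemma divDiff_eq_dd (f : ℝ → ℝ) (y : ℕ → ℝ) :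
    ∀ n a (z : Fin (n + 1) → ℝ), (∀ i : Fin (n + 1), z i = y (a + i.1)) →
      divDiff f n z = dd f y a n := by
  intro n
  induction n with
  | zero => intro a z hz; rw [divDiff, dd, hz 0]; simp
  | succ n ih =>
    intro a z hz
    rw [divDiff, dd,
      ih (a + 1) (fun i => z i.succ)
        (fun i => by show z i.succ = _; rw [hz i.succ]; congr 1; simp [Fin.val_succ]; omega),
      ih a (fun i => z i.castSucc)
        (fun i => by show z i.castSucc = _; rw [hz i.castSucc]; simp),
      hz (Fin.last (n + 1)), hz 0]
    congr 2

/-- Leibniz rule for divided differences. -/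
theorem divDiff_leibniz (f g : ℝ → ℝ) (q : ℕ) (x : Fin (q + 1) → ℝ)
    (hx : Function.Injective x) :
    divDiff (fun t => f t * g t) q x =
      ∑ k ∈ (Finset.range (q + 1)).attach,
        divDiff f k.1 (fun i : Fin (k.1 + 1) =>
            x ⟨i.1, by have h1 := Finset.mem_range.mp k.2; have h2 := i.isLt; omega⟩) *
          divDiff g (q - k.1) (fun i : Fin (q - k.1 + 1) =>
            x ⟨k.1 + i.1, by have h1 := Finset.mem_range.mp k.2; have h2 := i.isLt; omega⟩) := by
  set y : ℕ → ℝ := fun i => x ⟨min i q, by omega⟩ with hy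
  have hdist : ∀ i j, 0 ≤ i → i < j → j ≤ 0 + q → y i ≠ y j := by
    intro i j _ hij hj e
    have := hx e
    have h2 := congrArg Fin.val this
    simp at h2
    omega
  have hL : divDiff (fun t => f t * g t) q x = dd (fun t => f t * g t) y 0 q := by
    apply divDiff_eq_dd
    intro i
    simp only [hy]
    congr 1
    apply Fin.ext
    simp
    omega
  rw [hL, dd_leibniz f g y q 0 hdist,
    ← Finset.sum_attach (Finset.range (q + 1)) (fun k => dd f y 0 k * dd g y (0 + k) (q - k))]
  apply Finset.sum_congr rfl
  intro k _
  have hk : k.1 < q + 1 := Finset.mem_range.mp k.2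
  congr 1
  · refine (divDiff_eq_dd f y k.1 0 _ (fun i => ?_)).symm
    simp only [hy]
    congr 1
    apply Fin.ext
    simp
    omega
  · refine (divDiff_eq_dd g y (q - k.1) (0 + k.1) _ (fun i => ?_)).symm
    simp only [hy]
    congr 1
    apply Fin.ext
    simp
    omega
end

section
/- Chebyshev divided-difference recurrence: for pairwise distinct nodes y_0,…,y_k ∈ ℝ with k ≥ 1 and any n ≥ 1, T_{n+1}[y_0,…,y_k] = 2·( y_k · T_n[y_0,…,y_k] + T_n[y_0,…,y_{k−1}] ) − T_{n−1}[y_0,…,y_k]. -/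
/-- Chebyshev polynomial of the first kind, as a real function. -/
noncomputable def chebT (n : ℤ) : ℝ → ℝ := fun y => (Polynomial.Chebyshev.T ℝ n).eval y

lemma divDiff_sub (f g : ℝ → ℝ) : ∀ (q : ℕ) (x : Fin (q+1) → ℝ),
    divDiff (fun t => f t - g t) q x = divDiff f q x - divDiff g q x := by
  intro q
  induction q with
  | zero => intro x; simp [divDiff]
  | succ p ih => intro x; simp only [divDiff, ih]; ring

lemma divDiff_const_mul (c : ℝ) (f : ℝ → ℝ) : ∀ (q : ℕ) (x : Fin (q+1) → ℝ),
    divDiff (fun t => c * f t) q x = c * divDiff f q x := by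
  intro q
  induction q with
  | zero => intro x; simp [divDiff]
  | succ p ih => intro x; simp only [divDiff, ih]; ring

lemma divDiff_id_mul (f : ℝ → ℝ) : ∀ (q : ℕ) (x : Fin (q+2) → ℝ), Function.Injective x →
    divDiff (fun t => t * f t) (q+1) x =
      x (Fin.last (q+1)) * divDiff f (q+1) x + divDiff f q (fun i => x i.castSucc) := by
  intro q
  induction q with
  | zero =>
    intro x hx
    have h : x 1 - x 0 ≠ 0 := sub_ne_zero.mpr (fun h => by simpa using hx h)
    simp only [divDiff, Fin.last]
    simp only [Fin.succ_zero_eq_one, Fin.castSucc_zero, show (⟨0 + 1, by omega⟩ : Fin (0 + 2)) = 1 from rfl]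
    field_simp
    ring
  | succ p ih =>
    intro x hx
    have htail := ih (fun i => x i.succ) (hx.comp (Fin.succ_injective _))
    have hinit := ih (fun i => x i.castSucc) (hx.comp (Fin.castSucc_injective _))
    have h1 : x (Fin.last (p+2)) - x 0 ≠ 0 :=
      sub_ne_zero.mpr (fun h => by simpa using hx h)
    have h2 : x (Fin.last (p+1)).castSucc - x 0 ≠ 0 :=
      sub_ne_zero.mpr (fun h => by simpa [Fin.ext_iff] using hx h)
    simp only [divDiff] at *
    rw [htail, hinit]
    have h3 : x (Fin.last (p+2)) - x 1 ≠ 0 :=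
      sub_ne_zero.mpr (fun h => by simpa [Fin.ext_iff] using hx h)
    simp only [Fin.succ_castSucc, Fin.succ_last, Fin.castSucc_zero, Fin.succ_zero_eq_one,
      show p + 1 + 1 = p + 2 from rfl] at *
    field_simp
    ring

lemma chebT_rec (n : ℤ) : chebT (n + 1) = fun t => 2 * (t * chebT n t) - chebT (n - 1) t := by
  funext t
  have := Polynomial.Chebyshev.T_add_two ℝ (n - 1)
  simp only [sub_add_cancel, show n - 1 + 2 = n + 1 by ring] at this
  simp [chebT, this]
  ring

/-- Chebyshev divided-difference recurrence. -/
theorem chebT_divDiff_recurrence (n : ℕ) (hn : 1 ≤ n) (m : ℕ)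
    (y : Fin (m + 1 + 1) → ℝ) (hy : Function.Injective y) :
    divDiff (chebT (n + 1)) (m + 1) y =
      2 * (y (Fin.last (m + 1)) * divDiff (chebT n) (m + 1) y +
            divDiff (chebT n) m (fun i => y i.castSucc)) -
        divDiff (chebT (n - 1)) (m + 1) y := by
  rw [chebT_rec (n : ℤ), divDiff_sub, divDiff_const_mul, divDiff_id_mul (chebT n) m y hy]
end

section
/- Uniform bound on Chebyshev divided differences: for any pairwise distinct nodes y_0,…,y_q ∈ [−1,1] and any n ≥ q ≥ 1, |T_n[y_0,…,y_q]| ≤ 2^{q−1} · (n/q) · (2q)_{n−q} / (n−q)!, where (a)_m is the Pochhammer symbol. -/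
open Polynomial Finset



/-- `p` is a nonnegative combination of Chebyshev `T` polynomials. -/
def IsNonnegCheb (p : ℝ[X]) : Prop :=
  ∃ (m : ℕ) (a : ℕ → ℝ), (∀ j, 0 ≤ a j) ∧
    p = ∑ j ∈ Finset.range m, Polynomial.C (a j) * Polynomial.Chebyshev.T ℝ j

lemma pad_sum (m M : ℕ) (h : m ≤ M) (a : ℕ → ℝ) :
    ∑ j ∈ Finset.range M, Polynomial.C (if j < m then a j else 0) * Polynomial.Chebyshev.T ℝ j
      = ∑ j ∈ Finset.range m, Polynomial.C (a j) * Polynomial.Chebyshev.T ℝ j := by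
  rw [← Finset.sum_subset (Finset.range_subset_range.mpr h)
    (fun x _ hx => by simp [Finset.mem_range.not.mp hx, Nat.le_of_not_lt])]
  exact Finset.sum_congr rfl fun j hj => by simp [Finset.mem_range.mp hj]

lemma IsNonnegCheb.add {p q : ℝ[X]} (hp : IsNonnegCheb p) (hq : IsNonnegCheb q) :
    IsNonnegCheb (p + q) := by
  obtain ⟨m1, a1, ha1, rfl⟩ := hp
  obtain ⟨m2, a2, ha2, rfl⟩ := hq
  refine ⟨max m1 m2, fun j => (if j < m1 then a1 j else 0) + (if j < m2 then a2 j else 0),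
    fun j => add_nonneg (by split_ifs; exacts [ha1 j, le_rfl]) (by split_ifs; exacts [ha2 j, le_rfl]), ?_⟩
  simp only [map_add, add_mul, Finset.sum_add_distrib]
  rw [pad_sum m1 _ (le_max_left _ _), pad_sum m2 _ (le_max_right _ _)]

lemma IsNonnegCheb.zero : IsNonnegCheb 0 := ⟨0, fun _ => 0, fun _ => le_rfl, by simp⟩

lemma IsNonnegCheb.smul {p : ℝ[X]} (c : ℝ) (hc : 0 ≤ c) (hp : IsNonnegCheb p) :
    IsNonnegCheb (Polynomial.C c * p) := by
  obtain ⟨m, a, ha, rfl⟩ := hp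
  exact ⟨m, fun j => c * a j, fun j => mul_nonneg hc (ha j), by
    rw [Finset.mul_sum]; exact Finset.sum_congr rfl fun j _ => by rw [map_mul, mul_assoc]⟩

lemma isNonnegCheb_T (n : ℕ) : IsNonnegCheb (Polynomial.Chebyshev.T ℝ n) := by
  refine ⟨n + 1, fun j => if j = n then 1 else 0, fun j => by positivity, ?_⟩
  simp only [apply_ite Polynomial.C, map_one, map_zero, ite_mul, one_mul, zero_mul]
  rw [Finset.sum_ite_eq' (Finset.range (n+1)) n (fun j => Polynomial.Chebyshev.T ℝ j)]
  simp

lemma C_two_eq : (Polynomial.C (2:ℝ)) = 2 := map_ofNat Polynomial.C 2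

lemma U_eq_U_add_T (k : ℤ) : Polynomial.Chebyshev.U ℝ (k + 2)
    = Polynomial.Chebyshev.U ℝ k + 2 * Polynomial.Chebyshev.T ℝ (k + 2) := by
  have h1 := Polynomial.Chebyshev.U_eq ℝ (k + 2)
  have h2 := Polynomial.Chebyshev.T_eq_U_sub_X_mul_U ℝ (k + 2)
  simp only [show k + 2 - 1 = k + 1 from by ring, show k + 2 - 2 = k from by ring] at h1 h2
  have h3 := Polynomial.Chebyshev.U_eq_X_mul_U_add_T ℝ (k + 1)
  simp only [show k + 1 + 1 = k + 2 from by ring] at h3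
  linear_combination -h1 - 2 * h2

lemma isNonnegCheb_U (m : ℕ) : IsNonnegCheb (Polynomial.Chebyshev.U ℝ m) := by
  induction m using Nat.strong_induction_on with
  | _ m ih =>
    match m with
    | 0 => simpa using isNonnegCheb_T 0
    | 1 =>
      have h1 : Polynomial.Chebyshev.U ℝ ((1:ℕ):ℤ) = Polynomial.C 2 * Polynomial.Chebyshev.T ℝ 1 := by
        rw [Nat.cast_one, Polynomial.Chebyshev.U_one, Polynomial.Chebyshev.T_one, C_two_eq]
      rw [h1]
      exact IsNonnegCheb.smul 2 (by norm_num) (by simpa using isNonnegCheb_T 1)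
    | (k + 2) =>
      have key : Polynomial.Chebyshev.U ℝ ((k:ℤ) + 2)
          = Polynomial.Chebyshev.U ℝ k + 2 * Polynomial.Chebyshev.T ℝ ((k:ℤ) + 2) :=
        U_eq_U_add_T k
      have hcast : ((k + 2 : ℕ) : ℤ) = (k : ℤ) + 2 := by push_cast; ring
      rw [hcast, key]
      have h2 : (2 : ℝ[X]) * Polynomial.Chebyshev.T ℝ ((k:ℤ) + 2)
          = Polynomial.C 2 * Polynomial.Chebyshev.T ℝ ((k + 2 : ℕ) : ℤ) := by
        rw [hcast, C_two_eq]
      rw [h2]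
      exact (ih k (by omega)).add (IsNonnegCheb.smul 2 (by norm_num) (isNonnegCheb_T (k + 2)))

lemma IsNonnegCheb.derivative {p : ℝ[X]} (hp : IsNonnegCheb p) :
    IsNonnegCheb (Polynomial.derivative p) := by
  obtain ⟨m, a, ha, rfl⟩ := hp
  rw [map_sum]
  induction m with
  | zero => simpa using IsNonnegCheb.zero
  | succ m ihm =>
    rw [Finset.sum_range_succ]
    refine ihm.add ?_
    have hd : Polynomial.derivative (Polynomial.C (a m) * Polynomial.Chebyshev.T ℝ m)
        = Polynomial.C (a m * m) * Polynomial.Chebyshev.U ℝ ((m : ℤ) - 1) := by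
      rw [Polynomial.derivative_C_mul, Polynomial.Chebyshev.T_derivative_eq_U, map_mul,
        Polynomial.C_eq_natCast]
      push_cast
      ring
    rw [hd]
    match m with
    | 0 => simp only [Nat.cast_zero, zero_sub, Polynomial.Chebyshev.U_neg_one, mul_zero]
           exact IsNonnegCheb.zero
    | r + 1 =>
      have : ((r + 1 : ℕ) : ℤ) - 1 = (r : ℤ) := by push_cast; ring
      rw [this]
      exact IsNonnegCheb.smul _ (mul_nonneg (ha _) (by positivity)) (isNonnegCheb_U r)

lemma isNonnegCheb_iterate_derivative (n q : ℕ) :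
    IsNonnegCheb (Polynomial.derivative^[q] (Polynomial.Chebyshev.T ℝ n)) := by
  induction q with
  | zero => exact isNonnegCheb_T n
  | succ q ih => rw [Function.iterate_succ_apply']; exact ih.derivative

lemma abs_T_eval_le_one (j : ℤ) {x : ℝ} (hx : x ∈ Set.Icc (-1 : ℝ) 1) :
    |(Polynomial.Chebyshev.T ℝ j).eval x| ≤ 1 := by
  have h := Real.cos_arccos hx.1 hx.2
  rw [← h, Polynomial.Chebyshev.T_real_cos]
  exact Real.abs_cos_le_one _

lemma T_eval_one (j : ℤ) : (Polynomial.Chebyshev.T ℝ j).eval 1 = 1 := by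
  have := Polynomial.Chebyshev.T_real_cos 0 j
  simpa using this

lemma IsNonnegCheb.abs_eval_le {p : ℝ[X]} (hp : IsNonnegCheb p) {x : ℝ}
    (hx : x ∈ Set.Icc (-1 : ℝ) 1) : |p.eval x| ≤ p.eval 1 := by
  obtain ⟨m, a, ha, rfl⟩ := hp
  simp only [Polynomial.eval_finset_sum, Polynomial.eval_mul, Polynomial.eval_C]
  calc |∑ j ∈ Finset.range m, a j * (Polynomial.Chebyshev.T ℝ j).eval x|
      ≤ ∑ j ∈ Finset.range m, |a j * (Polynomial.Chebyshev.T ℝ j).eval x| :=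
        Finset.abs_sum_le_sum_abs _ _
    _ ≤ ∑ j ∈ Finset.range m, a j * (Polynomial.Chebyshev.T ℝ j).eval 1 := by
        refine Finset.sum_le_sum fun j _ => ?_
        rw [abs_mul, abs_of_nonneg (ha j), T_eval_one]
        calc a j * |(Polynomial.Chebyshev.T ℝ j).eval x| ≤ a j * 1 :=
              mul_le_mul_of_nonneg_left (abs_T_eval_le_one j hx) (ha j)
          _ = a j * 1 := rfl


/-- The Chebyshev differential equation, polynomial form. -/
lemma cheb_ode (n : ℤ) :
    (1 - Polynomial.X ^ 2) * Polynomial.derivative (Polynomial.derivative (Polynomial.Chebyshev.T ℝ n))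
      = Polynomial.X * Polynomial.derivative (Polynomial.Chebyshev.T ℝ n)
        - (n : ℝ[X]) ^ 2 * Polynomial.Chebyshev.T ℝ n := by
  have h1 := congr_arg Polynomial.derivative
    (Polynomial.Chebyshev.one_sub_X_sq_mul_derivative_T_eq_poly_in_T (R := ℝ) (n - 1))
  simp only [show n - 1 + 1 = n from by ring, Polynomial.derivative_mul, Polynomial.derivative_sub,
    Polynomial.derivative_one, Polynomial.derivative_pow, Polynomial.derivative_X,
    Polynomial.derivative_intCast, Polynomial.derivative_add, Polynomial.C_eq_natCast] at h1
  have h2 := Polynomial.Chebyshev.T_derivative_eq_U (R := ℝ) n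
  have h3 := Polynomial.Chebyshev.T_derivative_eq_U (R := ℝ) (n - 1)
  have h4 := Polynomial.Chebyshev.U_eq ℝ n
  have h5 := Polynomial.Chebyshev.T_eq_U_sub_X_mul_U ℝ n
  simp only [show n - 1 - 1 = n - 2 from by ring] at h3
  -- difference should be n*(n-1)*(U_{n-2} + U_n - 2X U_{n-1}) = 0
  linear_combination (norm := (push_cast; ring_nf))
    h1 + (Polynomial.X - (n:ℝ[X]) * Polynomial.X) * h2 + ((n:ℝ[X]) - 1) * (n:ℝ[X]) * h4
      + ((n:ℝ[X]) ^ 2 - (n:ℝ[X])) * h5 + (n:ℝ[X]) * h3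

/-- The `k` times differentiated Chebyshev ODE. -/
lemma cheb_ode_iter (n : ℤ) (k : ℕ) :
    (1 - Polynomial.X ^ 2) * Polynomial.derivative^[k + 2] (Polynomial.Chebyshev.T ℝ n)
      = (2 * (k : ℝ[X]) + 1) * Polynomial.X * Polynomial.derivative^[k + 1] (Polynomial.Chebyshev.T ℝ n)
        + ((k : ℝ[X]) ^ 2 - (n : ℝ[X]) ^ 2) * Polynomial.derivative^[k] (Polynomial.Chebyshev.T ℝ n) := by
  induction k with
  | zero =>
    simpa [← sub_eq_add_neg] using cheb_ode n
  | succ k ih =>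
    have h1 := congr_arg Polynomial.derivative ih
    simp only [Polynomial.derivative_mul, Polynomial.derivative_sub, Polynomial.derivative_add,
      Polynomial.derivative_one, Polynomial.derivative_pow, Polynomial.derivative_X,
      Polynomial.derivative_natCast, Polynomial.C_eq_natCast, Polynomial.derivative_ofNat,
      Polynomial.derivative_intCast,
      ← Function.iterate_succ_apply' Polynomial.derivative, Nat.succ_eq_add_one] at h1
    have e3 : (((k+1:ℕ)) : ℝ[X]) = (k : ℝ[X]) + 1 := by push_cast; ring
    rw [e3]
    linear_combination (norm := (push_cast; ring_nf)) h1

lemma T_eval_one' (j : ℤ) : (Polynomial.Chebyshev.T ℝ j).eval 1 = 1 := by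
  simpa using Polynomial.Chebyshev.T_real_cos 0 j

/-- Value of the iterated derivative of `T n` at `1`. -/
lemma cheb_iter_deriv_eval_one (n : ℤ) (q : ℕ) :
    (Polynomial.derivative^[q] (Polynomial.Chebyshev.T ℝ n)).eval 1
      = ∏ k ∈ Finset.range q, (((n : ℝ) ^ 2 - (k : ℝ) ^ 2) / (2 * k + 1)) := by
  induction q with
  | zero => simpa using T_eval_one' n
  | succ q ih =>
    have h := congr_arg (Polynomial.eval (1 : ℝ)) (cheb_ode_iter n q)
    simp only [Polynomial.eval_mul, Polynomial.eval_add, Polynomial.eval_sub, Polynomial.eval_one,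
      Polynomial.eval_pow, Polynomial.eval_X, Polynomial.eval_natCast, Polynomial.eval_intCast,
      one_pow, sub_self, zero_mul, Polynomial.eval_ofNat, Function.iterate_succ_apply] at h
    have h2q : (2 * (q:ℝ) + 1) ≠ 0 := by positivity
    rw [Finset.prod_range_succ, ← ih]
    have : (Polynomial.derivative^[q + 1] (Polynomial.Chebyshev.T ℝ n)).eval 1
        = ((n:ℝ) ^ 2 - (q:ℝ) ^ 2) / (2 * q + 1)
          * (Polynomial.derivative^[q] (Polynomial.Chebyshev.T ℝ n)).eval 1 := by
      rw [Function.iterate_succ_apply]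
      field_simp
      linear_combination -h
    rw [this]; ring


lemma interp_comp_succ (q : ℕ) (f : ℝ → ℝ) (y : Fin (q + 2) → ℝ) (hy : Function.Injective y) :
    Lagrange.interpolate (Finset.univ.erase 0) y (fun i => f (y i))
      = Lagrange.interpolate Finset.univ (fun (i : Fin (q+1)) => y i.succ) (fun (i : Fin (q+1)) => f (y i.succ)) := by
  symm
  have hcard : ((Finset.univ : Finset (Fin (q+2))).erase 0).card = q + 1 := by
    rw [Finset.card_erase_of_mem (Finset.mem_univ _)]; simp
  refine Lagrange.eq_interpolate_of_eval_eq _ (hy.injOn) ?_ ?_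
  · rw [hcard]
    have := Lagrange.degree_interpolate_lt (s := Finset.univ) (r := fun (i : Fin (q+1)) => f (y i.succ))
      (Function.Injective.injOn (fun (a b : Fin (q+1)) h => Fin.succ_injective _ (hy h)))
    simpa using this
  · intro i hi
    obtain ⟨j, rfl⟩ := Fin.exists_succ_eq.mpr (Finset.ne_of_mem_erase hi)
    exact Lagrange.eval_interpolate_at_node _
      (Function.Injective.injOn (fun (a b : Fin (q+1)) h => Fin.succ_injective _ (hy h))) (Finset.mem_univ j)

lemma interp_comp_castSucc (q : ℕ) (f : ℝ → ℝ) (y : Fin (q + 2) → ℝ) (hy : Function.Injective y) :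
    Lagrange.interpolate (Finset.univ.erase (Fin.last (q+1))) y (fun i => f (y i))
      = Lagrange.interpolate Finset.univ (fun (i : Fin (q+1)) => y i.castSucc) (fun (i : Fin (q+1)) => f (y i.castSucc)) := by
  symm
  have hcard : ((Finset.univ : Finset (Fin (q+2))).erase (Fin.last (q+1))).card = q + 1 := by
    rw [Finset.card_erase_of_mem (Finset.mem_univ _)]; simp
  refine Lagrange.eq_interpolate_of_eval_eq _ (hy.injOn) ?_ ?_
  · rw [hcard]
    have := Lagrange.degree_interpolate_lt (s := Finset.univ) (r := fun (i : Fin (q+1)) => f (y i.castSucc))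
      (Function.Injective.injOn (fun (a b : Fin (q+1)) h => Fin.castSucc_injective _ (hy h)))
    simpa using this
  · intro i hi
    obtain ⟨j, rfl⟩ := Fin.exists_castSucc_eq.mpr (Finset.ne_of_mem_erase hi)
    exact Lagrange.eval_interpolate_at_node _
      (Function.Injective.injOn (fun (a b : Fin (q+1)) h => Fin.castSucc_injective _ (hy h))) (Finset.mem_univ j)

lemma coeff_mul_basisDivisor (P : ℝ[X]) (a b : ℝ) (q : ℕ) (hP : P.coeff (q + 1) = 0) :
    (P * Lagrange.basisDivisor a b).coeff (q + 1) = (a - b)⁻¹ * P.coeff q := by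
  unfold Lagrange.basisDivisor
  rw [show P * (Polynomial.C (a - b)⁻¹ * (Polynomial.X - Polynomial.C b))
      = (P * Polynomial.X - Polynomial.C b * P) * Polynomial.C (a - b)⁻¹ from by ring]
  rw [Polynomial.coeff_mul_C, Polynomial.coeff_sub, Polynomial.coeff_mul_X,
    Polynomial.coeff_C_mul, hP]
  ring

lemma divDiff_eq_coeff (f : ℝ → ℝ) : ∀ (q : ℕ) (y : Fin (q + 1) → ℝ), Function.Injective y →
    divDiff f q y = (Lagrange.interpolate Finset.univ y (fun i => f (y i))).coeff q
  | 0, y, hy => by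
    simp only [divDiff]
    rw [show (Finset.univ : Finset (Fin 1)) = {0} from rfl, Lagrange.interpolate_singleton]
    simp
  | q + 1, y, hy => by
    have hlast0 : (Fin.last (q + 1)) ≠ (0 : Fin (q + 2)) := by
      simp [Fin.ext_iff]
    have hy0 : y (Fin.last (q+1)) - y 0 ≠ 0 := sub_ne_zero.mpr (fun h => hlast0 (hy h))
    have key := Lagrange.interpolate_eq_add_interpolate_erase
      (hy.injOn) (Finset.mem_univ (Fin.last (q+1)))
      (Finset.mem_univ (0 : Fin (q+2))) hlast0 (r := fun i => f (y i))
    have hA := interp_comp_succ q f y hy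
    have hB := interp_comp_castSucc q f y hy
    have hcardA : ((Finset.univ : Finset (Fin (q+2))).erase 0).card = q + 1 := by
      rw [Finset.card_erase_of_mem (Finset.mem_univ _)]; simp
    have hcardB : ((Finset.univ : Finset (Fin (q+2))).erase (Fin.last (q+1))).card = q + 1 := by
      rw [Finset.card_erase_of_mem (Finset.mem_univ _)]; simp
    have hA0 : (Lagrange.interpolate (Finset.univ.erase 0) y (fun i => f (y i))).coeff (q+1) = 0 := by
      apply Polynomial.coeff_eq_zero_of_degree_lt
      have := Lagrange.degree_interpolate_lt (s := Finset.univ.erase 0)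
        (r := fun i => f (y i)) hy.injOn
      rwa [hcardA] at this
    have hB0 : (Lagrange.interpolate (Finset.univ.erase (Fin.last (q+1))) y
        (fun i => f (y i))).coeff (q+1) = 0 := by
      apply Polynomial.coeff_eq_zero_of_degree_lt
      have := Lagrange.degree_interpolate_lt (s := Finset.univ.erase (Fin.last (q+1)))
        (r := fun i => f (y i)) hy.injOn
      rwa [hcardB] at this
    have hcoeff := congr_arg (fun p => Polynomial.coeff p (q + 1)) key
    simp only [Polynomial.coeff_add] at hcoeff
    rw [coeff_mul_basisDivisor _ _ _ q hA0, coeff_mul_basisDivisor _ _ _ q hB0] at hcoeff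
    rw [hA, hB] at hcoeff
    show (divDiff f q (fun (i : Fin (q+1)) => y i.succ) - divDiff f q (fun (i : Fin (q+1)) => y i.castSucc)) /
        (y (Fin.last (q + 1)) - y 0) = _
    rw [divDiff_eq_coeff f q (fun (i : Fin (q+1)) => y i.succ) (fun (a b : Fin (q+1)) h => Fin.succ_injective _ (hy h)),
      divDiff_eq_coeff f q (fun (i : Fin (q+1)) => y i.castSucc) (fun (a b : Fin (q+1)) h => Fin.castSucc_injective _ (hy h))]
    rw [hcoeff,
      show (y 0 - y (Fin.last (q+1)))⁻¹ = -(y (Fin.last (q+1)) - y 0)⁻¹ from by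
        rw [← neg_sub, inv_neg]]
    ring


lemma poly_rolle : ∀ (k : ℕ) (p : ℝ[X]) (x : Fin (k + 1) → ℝ), StrictMono x →
    (∀ i, p.eval (x i) = 0) →
    ∃ ξ ∈ Set.Icc (x 0) (x (Fin.last k)), (Polynomial.derivative^[k] p).eval ξ = 0
  | 0, p, x, _, h0 => ⟨x 0, ⟨le_rfl, le_rfl⟩, h0 0⟩
  | k + 1, p, x, hmono, h0 => by
    have step : ∀ i : Fin (k + 1), ∃ c ∈ Set.Ioo (x i.castSucc) (x i.succ),
        (Polynomial.derivative p).eval c = 0 := by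
      intro i
      have hab : x i.castSucc < x i.succ := hmono Fin.castSucc_lt_succ
      obtain ⟨c, hc, hc0⟩ := exists_deriv_eq_zero (f := fun t => p.eval t) hab
        ((p.continuous).continuousOn) (by simp only [h0])
      refine ⟨c, hc, ?_⟩
      rw [show deriv (fun t => p.eval t) c = (Polynomial.derivative p).eval c from
        Polynomial.deriv p] at hc0
      exact hc0
    choose c hc hc0 using step
    have hcmono : StrictMono c := by
      rw [Fin.strictMono_iff_lt_succ]
      intro i
      calc c i.castSucc < x i.castSucc.succ := (hc i.castSucc).2
        _ = x i.succ.castSucc := by rw [Fin.succ_castSucc]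
        _ < c i.succ := (hc i.succ).1
    obtain ⟨ξ, hξ, hξ0⟩ := poly_rolle k (Polynomial.derivative p) c hcmono hc0
    refine ⟨ξ, ⟨?_, ?_⟩, ?_⟩
    · calc x 0 ≤ x (Fin.castSucc 0) := by norm_num
        _ ≤ c 0 := (hc 0).1.le
        _ ≤ ξ := hξ.1
    · calc ξ ≤ c (Fin.last k) := hξ.2
        _ ≤ x (Fin.last k).succ := (hc _).2.le
        _ = x (Fin.last (k+1)) := by rw [Fin.succ_last]
    · rwa [Function.iterate_succ_apply]


lemma prod_add_cast_fact (c : ℕ) (hc : 1 ≤ c) (m : ℕ) :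
    (∏ k ∈ Finset.range m, ((c : ℝ) + k)) * (c - 1).factorial = (c + m - 1).factorial := by
  induction m with
  | zero => simp
  | succ m ih =>
    rw [Finset.prod_range_succ, mul_right_comm, ih]
    have h1 : c + (m + 1) - 1 = (c + m - 1) + 1 := by omega
    rw [h1, Nat.factorial_succ]
    have h2 : ((c + m - 1 + 1 : ℕ) : ℝ) = (c : ℝ) + m := by
      have : c + m - 1 + 1 = c + m := by omega
      rw [this]; push_cast; ring
    push_cast [h2]
    ring

lemma prod_sub_cast_fact (n q : ℕ) (hq : q ≤ n) :
    (∏ k ∈ Finset.range q, ((n : ℝ) - k)) * (n - q).factorial = n.factorial := by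
  induction q with
  | zero => simp
  | succ q ih =>
    have hq' : q ≤ n := by omega
    rw [Finset.prod_range_succ]
    have h2 : ((n : ℝ) - q) = ((n - q : ℕ) : ℝ) := (Nat.cast_sub hq').symm
    have h1 : (n - q) * (n - (q+1)).factorial = (n - q).factorial := by
      have h3 : n - q = (n - (q + 1)) + 1 := by omega
      rw [h3, Nat.factorial_succ]
    rw [h2, mul_assoc, ← Nat.cast_mul, h1]
    exact ih hq'

lemma prod_odd_fact (q : ℕ) :
    (∏ k ∈ Finset.range q, (2 * (k : ℝ) + 1)) * (2 ^ q * q.factorial) = (2 * q).factorial := by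
  induction q with
  | zero => simp
  | succ q ih =>
    rw [Finset.prod_range_succ]
    have h1 : 2 * (q + 1) = (2 * q + 1) + 1 := by ring
    rw [h1, Nat.factorial_succ (2*q+1), Nat.factorial_succ (2*q), Nat.factorial_succ q]
    push_cast
    linear_combination ((2*(q:ℝ)+1) * 2 * ((q:ℝ)+1)) * ih

lemma final_arith (n q : ℕ) (hq : 1 ≤ q) (hn : q ≤ n) :
    (∏ k ∈ Finset.range q, (((n : ℝ) ^ 2 - (k : ℝ) ^ 2) / (2 * k + 1))) / q.factorial
      = 2 ^ (q - 1) * ((n : ℝ) / q) *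
        ((ascPochhammer ℝ (n - q)).eval (2 * q : ℝ) / (n - q).factorial) := by
  have hn1 : 1 ≤ n := le_trans hq hn
  -- rewrite the Pochhammer term as a natural number
  have hpoch : (ascPochhammer ℝ (n - q)).eval (2 * q : ℝ)
      = ((2 * q).ascFactorial (n - q) : ℝ) := by
    have : (2 * q : ℝ) = ((2 * q : ℕ) : ℝ) := by push_cast; ring
    rw [this, ← ascPochhammer_eval_cast, ascPochhammer_nat_eq_ascFactorial]
  rw [hpoch]
  -- split the product
  have hsplit : (∏ k ∈ Finset.range q, (((n : ℝ) ^ 2 - (k : ℝ) ^ 2) / (2 * k + 1)))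
      = ((∏ k ∈ Finset.range q, ((n : ℝ) - k)) * ∏ k ∈ Finset.range q, ((n : ℝ) + k))
        / ∏ k ∈ Finset.range q, (2 * (k : ℝ) + 1) := by
    rw [← Finset.prod_mul_distrib, ← Finset.prod_div_distrib]
    exact Finset.prod_congr rfl fun k _ => by ring_nf
  rw [hsplit]
  have hA := prod_sub_cast_fact n q hn
  have hB := prod_add_cast_fact n hn1 q
  have hC := prod_odd_fact q
  have hP : ((2 * q).ascFactorial (n - q) : ℝ) * ((2 * q - 1).factorial : ℝ)
      = ((n + q - 1).factorial : ℝ) := by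
    have h := Nat.factorial_mul_ascFactorial' (2 * q) (n - q) (by omega)
    have h2 : 2 * q + (n - q) - 1 = n + q - 1 := by omega
    rw [h2] at h
    rw [mul_comm, ← Nat.cast_mul, h]
  have h2q : ((2 * q).factorial : ℝ) = (2 * q) * ((2 * q - 1).factorial : ℝ) := by
    have : 2 * q = (2 * q - 1) + 1 := by omega
    rw [this, Nat.factorial_succ]
    push_cast [show 2 * q - 1 + 1 = 2 * q from by omega]
    ring
  have hfn : ((n : ℕ).factorial : ℝ) = n * ((n - 1).factorial : ℝ) := by
    have : n = (n - 1) + 1 := by omega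
    nth_rewrite 1 [this]
    rw [Nat.factorial_succ]
    push_cast [show n - 1 + 1 = n from by omega]
    ring
  have h2pow : (2 : ℝ) ^ q = 2 * 2 ^ (q - 1) := by
    have : q = (q - 1) + 1 := by omega
    nth_rewrite 1 [this]
    rw [pow_succ]; ring
  -- nonzeroness
  have f1 : ((n - q).factorial : ℝ) ≠ 0 := Nat.cast_ne_zero.mpr (Nat.factorial_ne_zero _)
  have f2 : ((n - 1).factorial : ℝ) ≠ 0 := Nat.cast_ne_zero.mpr (Nat.factorial_ne_zero _)
  have f3 : ((2 * q - 1).factorial : ℝ) ≠ 0 := Nat.cast_ne_zero.mpr (Nat.factorial_ne_zero _)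
  have fq : ((q : ℕ).factorial : ℝ) ≠ 0 := Nat.cast_ne_zero.mpr (Nat.factorial_ne_zero _)
  have hq0 : (q : ℝ) ≠ 0 := Nat.cast_ne_zero.mpr (by omega)
  have hC0 : (∏ k ∈ Finset.range q, (2 * (k : ℝ) + 1)) ≠ 0 := by
    apply Finset.prod_ne_zero_iff.mpr
    intro k _
    positivity
  have EA : (∏ k ∈ Finset.range q, ((n : ℝ) - k)) = (n.factorial : ℝ) / ((n-q).factorial : ℝ) :=
    (eq_div_iff f1).mpr hA
  have EB : (∏ k ∈ Finset.range q, ((n : ℝ) + k))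
      = ((n+q-1).factorial : ℝ) / ((n-1).factorial : ℝ) := (eq_div_iff f2).mpr hB
  have hden : (2:ℝ) ^ q * (q.factorial : ℝ) ≠ 0 := by positivity
  have EC : (∏ k ∈ Finset.range q, (2 * (k : ℝ) + 1))
      = ((2*q).factorial : ℝ) / ((2:ℝ) ^ q * (q.factorial : ℝ)) := (eq_div_iff hden).mpr hC
  have EP : ((2 * q).ascFactorial (n - q) : ℝ)
      = ((n+q-1).factorial : ℝ) / ((2*q-1).factorial : ℝ) := (eq_div_iff f3).mpr hP
  rw [EA, EB, EC, EP, hfn, h2q, h2pow]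
  have hq0' : (2:ℝ) * q ≠ 0 := by positivity
  field_simp

/-- uniform bound on Chebyshev divided differences. -/
theorem chebT_divDiff_bound (n q : ℕ) (hq : 1 ≤ q) (hn : q ≤ n)
    (y : Fin (q + 1) → ℝ) (hy : Function.Injective y)
    (hmem : ∀ i, y i ∈ Set.Icc (-1 : ℝ) 1) :
    |divDiff (chebT n) q y| ≤
      2 ^ (q - 1) * ((n : ℝ) / q) *
        ((ascPochhammer ℝ (n - q)).eval (2 * q : ℝ) / (n - q).factorial) := by
  classical
  set P : ℝ[X] := Lagrange.interpolate Finset.univ y (fun i => chebT n (y i)) with hPdef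
  have hdd : divDiff (chebT n) q y = P.coeff q := divDiff_eq_coeff (chebT n) q y hy
  -- degree of P
  have hdegP : P.degree < (q + 1 : ℕ) := by
    have := Lagrange.degree_interpolate_lt (s := Finset.univ) (r := fun i => chebT n (y i))
      hy.injOn
    simpa [hPdef] using this
  have hnatP : P.natDegree ≤ q := by
    by_cases h0 : P = 0
    · simp [h0]
    · have := (Polynomial.natDegree_lt_iff_degree_lt h0).mpr hdegP
      omega
  -- the error polynomial g vanishes at the nodes
  set g : ℝ[X] := Polynomial.Chebyshev.T ℝ n - P with hgdef
  have hg0 : ∀ i, g.eval (y i) = 0 := by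
    intro i
    rw [hgdef, Polynomial.eval_sub, hPdef,
      Lagrange.eval_interpolate_at_node _ hy.injOn (Finset.mem_univ i)]
    simp [chebT]
  -- sorted nodes
  set s : Finset ℝ := Finset.univ.image y with hsdef
  have hcard : s.card = q + 1 := by
    rw [hsdef, Finset.card_image_of_injective _ hy, Finset.card_univ, Fintype.card_fin]
  set e := s.orderIsoOfFin hcard with hedef
  set x : Fin (q + 1) → ℝ := fun i => (e i : ℝ) with hxdef
  have hxmono : StrictMono x := fun i j hij => by
    exact_mod_cast e.strictMono hij
  have hxmem : ∀ i, ∃ i0, y i0 = x i := by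
    intro i
    have : x i ∈ s := (e i).2
    rw [hsdef] at this
    obtain ⟨i0, _, h⟩ := Finset.mem_image.mp this
    exact ⟨i0, h⟩
  have hgx : ∀ i, g.eval (x i) = 0 := by
    intro i
    obtain ⟨i0, h⟩ := hxmem i
    rw [← h]; exact hg0 i0
  obtain ⟨ξ, hξIcc, hξ0⟩ := poly_rolle q g x hxmono hgx
  have hξmem : ξ ∈ Set.Icc (-1 : ℝ) 1 := by
    obtain ⟨i0, h0⟩ := hxmem 0
    obtain ⟨il, hl⟩ := hxmem (Fin.last q)
    constructor
    · exact le_trans (by rw [← h0]; exact (hmem i0).1) hξIcc.1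
    · exact le_trans hξIcc.2 (by rw [← hl]; exact (hmem il).2)
  -- iterated derivative of P is the constant q! * P.coeff q
  have hiterP : (Polynomial.derivative^[q] P).eval ξ = (q.factorial : ℝ) * P.coeff q := by
    have hdeg0 : (Polynomial.derivative^[q] P).natDegree = 0 := by
      have := Polynomial.natDegree_iterate_derivative P q
      omega
    have hc := Polynomial.eq_C_of_natDegree_le_zero (le_of_eq hdeg0)
    rw [hc, Polynomial.eval_C, Polynomial.coeff_iterate_derivative]
    rw [zero_add, Nat.descFactorial_self, nsmul_eq_mul]
  have hiterg : (Polynomial.derivative^[q] g).eval ξ = 0 := hξ0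
  have hTg : (Polynomial.derivative^[q] (Polynomial.Chebyshev.T ℝ n)).eval ξ
      = (q.factorial : ℝ) * P.coeff q := by
    rw [hgdef, Polynomial.iterate_derivative_sub, Polynomial.eval_sub] at hiterg
    rw [← hiterP]
    linarith [hiterg]
  -- bound |P.coeff q|
  have hqfacpos : (0:ℝ) < (q.factorial : ℝ) := by positivity
  have habs : |P.coeff q| ≤
      (Polynomial.derivative^[q] (Polynomial.Chebyshev.T ℝ n)).eval 1 / q.factorial := by
    rw [le_div_iff₀ hqfacpos]
    calc |P.coeff q| * (q.factorial : ℝ)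
        = |(q.factorial : ℝ) * P.coeff q| := by
          rw [abs_mul, abs_of_pos hqfacpos]; ring
      _ = |(Polynomial.derivative^[q] (Polynomial.Chebyshev.T ℝ n)).eval ξ| := by rw [hTg]
      _ ≤ (Polynomial.derivative^[q] (Polynomial.Chebyshev.T ℝ n)).eval 1 :=
          (isNonnegCheb_iterate_derivative n q).abs_eval_le hξmem
  have heval1 : (Polynomial.derivative^[q] (Polynomial.Chebyshev.T ℝ n)).eval 1
      = ∏ k ∈ Finset.range q, (((n : ℝ) ^ 2 - (k : ℝ) ^ 2) / (2 * k + 1)) := by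
    have := cheb_iter_deriv_eval_one (n : ℤ) q
    rw [this]
    push_cast
    ring
  rw [hdd]
  calc |P.coeff q|
      ≤ (Polynomial.derivative^[q] (Polynomial.Chebyshev.T ℝ n)).eval 1 / q.factorial := habs
    _ = (∏ k ∈ Finset.range q, (((n : ℝ) ^ 2 - (k : ℝ) ^ 2) / (2 * k + 1))) / q.factorial := by
        rw [heval1]
    _ = 2 ^ (q - 1) * ((n : ℝ) / q) *
        ((ascPochhammer ℝ (n - q)).eval (2 * q : ℝ) / (n - q).factorial) :=
        final_arith n q hq hn
end

section
/- Chebyshev–Bessel expansion of the exponential: for all y ∈ [−1,1] and c ∈ ℝ, exp(c·y) = I_0(c) + 2·Σ_{n=1}^{∞} I_n(c)·T_n(y), where the series converges absolutely; here T_n is the n-th Chebyshev polynomial and I_n is the modified Bessel function of the first kind. -/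
/-- Modified Bessel function of the first kind of integer order `n`. -/
noncomputable def besselI (n : ℕ) (c : ℝ) : ℝ :=
  ∑' m : ℕ, (c / 2) ^ (2 * m + n) / (m.factorial * (m + n).factorial)

open Complex

def pairEquiv : ℤ × ℕ ≃ ℕ × ℕ where
  toFun p := (p.2 + p.1.toNat, p.2 + (-p.1).toNat)
  invFun q := ((q.1 : ℤ) - q.2, min q.1 q.2)
  left_inv p := by
    obtain ⟨n, k⟩ := p
    simp only [Prod.mk.injEq]
    constructor <;> omega
  right_inv q := by
    obtain ⟨j, m⟩ := q
    simp only [Prod.mk.injEq]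
    constructor <;> omega

lemma besselI_summable (n : ℕ) (c : ℝ) :
    Summable (fun m : ℕ => (c / 2) ^ (2 * m + n) / (m.factorial * (m + n).factorial)) := by
  have hg : Summable (fun m : ℕ => (|c/2|^2) ^ m / m.factorial * |c/2| ^ n) :=
    (Real.summable_pow_div_factorial _).mul_right _
  refine Summable.of_abs (hg.of_nonneg_of_le (fun m => abs_nonneg _) fun m => ?_)
  have h1 : (0:ℝ) < (m.factorial :ℝ) * ((m + n).factorial :ℝ) := by positivity
  have h2 : (m.factorial : ℝ) ≤ (m.factorial :ℝ) * ((m + n).factorial :ℝ) := by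
    exact_mod_cast Nat.le_mul_of_pos_right _ (m+n).factorial_pos
  calc |(c / 2) ^ (2 * m + n) / ((m.factorial :ℝ) * ((m + n).factorial :ℝ))|
      = |c/2| ^ (2*m+n) / ((m.factorial :ℝ) * ((m + n).factorial :ℝ)) := by
        rw [abs_div, _root_.abs_pow, abs_of_pos h1]
    _ ≤ |c/2| ^ (2*m+n) / (m.factorial : ℝ) := by
        gcongr
    _ = (|c/2|^2) ^ m / m.factorial * |c/2| ^ n := by
        rw [pow_add, pow_mul, div_mul_eq_mul_div]

lemma besselI_hasSum (n : ℕ) (c : ℝ) :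
    HasSum (fun m : ℕ => (c / 2) ^ (2 * m + n) / (m.factorial * (m + n).factorial))
      (besselI n c) :=
  (besselI_summable n c).hasSum

lemma hasSum_exp_div (w : ℂ) : HasSum (fun n : ℕ => w ^ n / n.factorial) (Complex.exp w) := by
  have h1 := (NormedSpace.expSeries_div_summable w).hasSum
  have h2 : Complex.exp w = ∑' n : ℕ, w ^ n / n.factorial := by
    rw [Complex.exp_eq_exp_ℂ, NormedSpace.exp_eq_tsum_div]
  rw [h2]
  exact h1

set_option maxHeartbeats 1000000 in
lemma key (c θ : ℝ) :
    HasSum (fun n : ℤ => ((besselI n.natAbs c : ℝ) : ℂ) * Complex.exp (θ * I) ^ n)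
      (Complex.exp (c * Real.cos θ)) := by
  set z : ℂ := Complex.exp (θ * I) with hzdef
  have hz : z ≠ 0 := Complex.exp_ne_zero _
  set x : ℂ := (c : ℂ) / 2 with hxdef
  set F : ℕ × ℕ → ℂ := fun p =>
    ((x * z) ^ p.1 / p.1.factorial) * ((x * z⁻¹) ^ p.2 / p.2.factorial) with hFdef
  -- absolute summability of the double series
  have hFnorm : Summable fun p : ℕ × ℕ => ‖F p‖ :=
    Summable.mul_norm (f := fun n : ℕ => (x * z) ^ n / n.factorial)
      (g := fun n : ℕ => (x * z⁻¹) ^ n / n.factorial)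
      (NormedSpace.norm_expSeries_div_summable (x * z))
      (NormedSpace.norm_expSeries_div_summable (x * z⁻¹))
  -- full sum
  have hS : (Complex.exp (x * z)) * (Complex.exp (x * z⁻¹)) = Complex.exp (c * Real.cos θ) := by
    rw [← Complex.exp_add]
    congr 1
    have hinv : z⁻¹ = Complex.exp (-(θ : ℂ) * I) := by
      rw [hzdef, ← Complex.exp_neg, neg_mul]
    have h2c := Complex.two_cos (θ : ℂ)
    have : x * z + x * z⁻¹ = x * (z + z⁻¹) := by ring
    rw [this, hinv, hzdef, ← h2c, hxdef]
    push_cast [Complex.ofReal_cos]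
    ring
  have hF : HasSum F (Complex.exp (c * Real.cos θ)) := by
    rw [← hS]
    exact HasSum.mul (f := fun n : ℕ => (x * z) ^ n / n.factorial)
      (g := fun n : ℕ => (x * z⁻¹) ^ n / n.factorial)
      (hasSum_exp_div (x * z)) (hasSum_exp_div (x * z⁻¹)) hFnorm.of_norm
  have hG : HasSum (F ∘ pairEquiv) (Complex.exp (c * Real.cos θ)) :=
    (pairEquiv.hasSum_iff).2 hF
  -- the rearranged terms
  have hFE : ∀ (n : ℤ) (k : ℕ), F (pairEquiv (n, k)) =
      (((c / 2) ^ (2 * k + n.natAbs) / (k.factorial * (k + n.natAbs).factorial) : ℝ) : ℂ)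
        * z ^ n := by
    intro n k
    obtain ⟨m, rfl | rfl⟩ := Int.eq_nat_or_neg n
    · have h1 : ((m : ℤ)).toNat = m := by simp
      have h2 : (-(m : ℤ)).toNat = 0 := by simp
      have h3 : ((m : ℤ)).natAbs = m := by simp
      simp only [hFdef, pairEquiv, Equiv.coe_fn_mk, h1, h2, h3, add_zero]
      rw [zpow_natCast]
      have hzz : z ^ k * z⁻¹ ^ k = 1 := by rw [← mul_pow, mul_inv_cancel₀ hz, one_pow]
      have key2 : (x * z) ^ (k + m) * (x * z⁻¹) ^ k = x ^ (2 * k + m) * z ^ m := by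
        calc (x * z) ^ (k + m) * (x * z⁻¹) ^ k
            = x ^ (2 * k + m) * z ^ m * (z ^ k * z⁻¹ ^ k) := by ring
          _ = x ^ (2 * k + m) * z ^ m := by rw [hzz, mul_one]
      rw [div_mul_div_comm, key2]
      push_cast
      rw [hxdef]
      ring
    · have h1 : ((-(m : ℤ))).toNat = 0 := by simp
      have h2 : (-(-(m : ℤ))).toNat = m := by simp
      have h3 : ((-(m : ℤ))).natAbs = m := by simp
      simp only [hFdef, pairEquiv, Equiv.coe_fn_mk, h1, h2, h3, add_zero]
      rw [zpow_neg, zpow_natCast]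
      have hzz : z ^ k * z⁻¹ ^ k = 1 := by rw [← mul_pow, mul_inv_cancel₀ hz, one_pow]
      have key2 : (x * z) ^ k * (x * z⁻¹) ^ (k + m) = x ^ (2 * k + m) * (z ^ m)⁻¹ := by
        calc (x * z) ^ k * (x * z⁻¹) ^ (k + m)
            = x ^ (2 * k + m) * z⁻¹ ^ m * (z ^ k * z⁻¹ ^ k) := by ring
          _ = x ^ (2 * k + m) * (z ^ m)⁻¹ := by rw [hzz, mul_one, inv_pow]
      rw [div_mul_div_comm, key2]
      push_cast
      rw [hxdef]
      ring
  have hinner : ∀ n : ℤ, HasSum (fun k : ℕ => F (pairEquiv (n, k)))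
      (((besselI n.natAbs c : ℝ) : ℂ) * z ^ n) := by
    intro n
    have hr : HasSum (fun k : ℕ =>
        (((c / 2) ^ (2 * k + n.natAbs) / (k.factorial * (k + n.natAbs).factorial) : ℝ) : ℂ))
        ((besselI n.natAbs c : ℝ) : ℂ) :=
      hasSum_ofReal.2 (besselI_hasSum n.natAbs c)
    have := hr.mul_right (z ^ n)
    simpa only [← hFE n] using this
  exact hG.prod_fiberwise hinner

/-- Chebyshev–Bessel expansion of the exponential on `[-1,1]`. -/
theorem exp_chebyshev_bessel (c : ℝ) (y : ℝ) (hy : y ∈ Set.Icc (-1 : ℝ) 1) :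
    Summable (fun n : ℕ => |besselI (n + 1) c * chebT (n + 1) y|) ∧
    Real.exp (c * y) =
      besselI 0 c + 2 * ∑' n : ℕ, besselI (n + 1) c * chebT (n + 1) y := by
  set θ := Real.arccos y with hθ
  have hcos : Real.cos θ = y := Real.cos_arccos hy.1 hy.2
  set z : ℂ := Complex.exp (θ * I) with hzdef
  have h := key c θ
  set g : ℤ → ℂ := fun n => ((besselI n.natAbs c : ℝ) : ℂ) * z ^ n with hgdef
  have h2 : HasSum (fun n : ℕ => g n + g (-n)) (Complex.exp (c * Real.cos θ) + g 0) :=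
    h.nat_add_neg
  have hg0 : g 0 = ((besselI 0 c : ℝ) : ℂ) := by simp [hgdef]
  -- value of the paired terms
  have hterm : ∀ n : ℕ, g ((n : ℤ) + 1) + g (-((n : ℤ) + 1)) =
      ((2 * besselI (n + 1) c * Real.cos ((n + 1) * θ) : ℝ) : ℂ) := by
    intro n
    have hna : ((n : ℤ) + 1).natAbs = n + 1 := by omega
    have hnb : (-((n : ℤ) + 1)).natAbs = n + 1 := by omega
    have hz1 : z ^ ((n : ℤ) + 1) = Complex.exp ((((n : ℕ) + 1 : ℝ) : ℂ) * (θ * I)) := by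
      rw [hzdef, ← Complex.exp_int_mul]
      norm_num
    have hz2 : z ^ (-((n : ℤ) + 1)) = Complex.exp (-((((n : ℕ) + 1 : ℝ) : ℂ) * (θ * I))) := by
      rw [hzdef, ← Complex.exp_int_mul]
      congr 1
      push_cast
      ring
    have h2c := Complex.two_cos ((((n : ℕ) + 1 : ℝ) : ℂ) * (θ : ℂ))
    have harg1 : (((n : ℕ) + 1 : ℝ) : ℂ) * (θ : ℂ) * I = (((n : ℕ) + 1 : ℝ) : ℂ) * ((θ : ℂ) * I) := by ring
    have harg2 : -((((n : ℕ) + 1 : ℝ) : ℂ) * (θ : ℂ)) * I = -((((n : ℕ) + 1 : ℝ) : ℂ) * ((θ : ℂ) * I)) := by ring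
    rw [harg1, harg2] at h2c
    have : g ((n : ℤ) + 1) + g (-((n : ℤ) + 1)) =
        ((besselI (n + 1) c : ℝ) : ℂ) * (z ^ ((n : ℤ) + 1) + z ^ (-((n : ℤ) + 1))) := by
      rw [hgdef]
      simp only [hna, hnb]
      ring
    push_cast
    rw [this, hz1, hz2, ← h2c]
    push_cast [Complex.ofReal_cos]
    ring
  have h3 : HasSum (fun n : ℕ => g ((n : ℤ) + 1) + g (-((n : ℤ) + 1)))
      (Complex.exp (c * Real.cos θ) - ((besselI 0 c : ℝ) : ℂ)) := by
    have h4 := (hasSum_nat_add_iff' (f := fun n : ℕ => g n + g (-(n : ℤ))) 1).2 h2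
    simp only [Finset.range_one, Finset.sum_singleton, Nat.cast_zero, neg_zero, hg0,
      Nat.cast_add, Nat.cast_one] at h4
    have heq : Complex.exp (c * Real.cos θ) + ((besselI 0 c : ℝ) : ℂ)
        - (((besselI 0 c : ℝ) : ℂ) + ((besselI 0 c : ℝ) : ℂ))
        = Complex.exp (c * Real.cos θ) - ((besselI 0 c : ℝ) : ℂ) := by ring
    rwa [heq] at h4
  simp only [hterm] at h3
  have hS2 : Complex.exp ((c : ℂ) * (Real.cos θ : ℂ)) = ((Real.exp (c * y) : ℝ) : ℂ) := by
    rw [← Complex.ofReal_mul, ← Complex.ofReal_exp, hcos]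
  rw [hS2, show ((Real.exp (c * y) : ℝ) : ℂ) - ((besselI 0 c : ℝ) : ℂ)
      = ((Real.exp (c * y) - besselI 0 c : ℝ) : ℂ) from by push_cast; ring] at h3
  have h5 : HasSum (fun n : ℕ => 2 * besselI (n + 1) c * Real.cos ((n + 1 : ℝ) * θ))
      (Real.exp (c * y) - besselI 0 c) := hasSum_ofReal.1 h3
  have hcheb : ∀ n : ℕ, Real.cos ((n + 1 : ℝ) * θ) = chebT ((n : ℤ) + 1) y := by
    intro n
    have h := Polynomial.Chebyshev.T_real_cos θ ((n : ℤ) + 1)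
    rw [hcos] at h
    simp only [chebT]
    rw [h]
    push_cast
    ring_nf
  simp only [hcheb, mul_assoc] at h5
  constructor
  · have hsum : Summable fun n : ℕ => besselI (n + 1) c * chebT ((n : ℤ) + 1) y := by
      have h6 := h5.summable.mul_left (2⁻¹ : ℝ)
      refine h6.congr fun n => ?_
      ring
    exact hsum.abs
  · have h7 := h5.tsum_eq
    rw [tsum_mul_left] at h7
    linarith [h7]
end
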